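/- The function f(t) = (1+t²)Φ(-t) - tφ(t) satisfies f(0) = 1/2, f is strictly decreasing on (0,∞), and f(t) → 0 as t → ∞. Consequently, for every δ ∈ (0,1) the equation f(t) = δ/2 has a unique positive solution α₀. -/

import Mathlib

/-!
With `Φ(-t) = ∫_{x > t} φ` and `∫_{x > t} x φ(x) dx = φ(t)` (as `φ' = -x φ`), the tail bound
`t Φ(-t) < φ(t)` is the positivity of `∫_{x > t} (x - t) φ(x) dx`. It makes
`f'(t) = 2 (t Φ(-t) - φ(t))` negative and gives `|f(t)| ≤ t φ(t) → 0` for `t ≥ 1`. The equation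
`f(t) = δ/2` is then solved by the intermediate value theorem, uniquely by strict monotonicity.
-/

noncomputable def stdNormalPDF (x : ℝ) : ℝ := Real.exp (-x ^ 2 / 2) / Real.sqrt (2 * Real.pi)

noncomputable def stdNormalCDF (x : ℝ) : ℝ := ∫ t in Set.Iic x, stdNormalPDF t

noncomputable def ffun (t : ℝ) : ℝ := (1 + t ^ 2) * stdNormalCDF (-t) - t * stdNormalPDF t

open Real MeasureTheory Set Filter Topology ProbabilityTheory
open scoped ENNReal

lemma stdNormalPDF_eq_gaussianPDFReal : stdNormalPDF = gaussianPDFReal 0 1 := by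
  ext x
  simp [stdNormalPDF, gaussianPDFReal, div_eq_inv_mul]

lemma stdNormalPDF_pos (x : ℝ) : 0 < stdNormalPDF x := by
  rw [stdNormalPDF_eq_gaussianPDFReal]
  exact gaussianPDFReal_pos _ _ _ one_ne_zero

lemma stdNormalPDF_neg (x : ℝ) : stdNormalPDF (-x) = stdNormalPDF x := by
  rw [stdNormalPDF, neg_sq, stdNormalPDF]

lemma integrable_stdNormalPDF : Integrable stdNormalPDF := by
  rw [stdNormalPDF_eq_gaussianPDFReal]
  exact integrable_gaussianPDFReal _ _

lemma integral_stdNormalPDF : ∫ x, stdNormalPDF x = 1 := by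
  rw [stdNormalPDF_eq_gaussianPDFReal]
  exact integral_gaussianPDFReal_eq_one _ one_ne_zero

lemma hasDerivAt_stdNormalPDF (x : ℝ) : HasDerivAt stdNormalPDF (-x * stdNormalPDF x) x := by
  have h : HasDerivAt (fun y ↦ -y ^ 2 / 2) (-x) x :=
    ((hasDerivAt_pow 2 x).neg.div_const 2).congr_deriv (by ring)
  refine (h.exp.div_const (√(2 * π))).congr_deriv ?_
  rw [stdNormalPDF]
  ring

lemma continuous_stdNormalPDF : Continuous stdNormalPDF :=
  continuous_iff_continuousAt.2 fun x ↦ (hasDerivAt_stdNormalPDF x).continuousAt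

lemma tendsto_pow_mul_stdNormalPDF_atTop (n : ℕ) :
    Tendsto (fun x ↦ x ^ n * stdNormalPDF x) atTop (𝓝 0) := by
  have h := ((tendsto_rpow_abs_mul_exp_neg_mul_sq_cocompact (a := 1 / 2) (by norm_num) n).mono_left
    atTop_le_cocompact).div_const (√(2 * π))
  rw [zero_div] at h
  refine h.congr' ?_
  filter_upwards [eventually_ge_atTop 0] with x hx
  rw [abs_of_nonneg hx, rpow_natCast, stdNormalPDF, mul_div_assoc]
  ring_nf

lemma integrable_mul_stdNormalPDF : Integrable fun x ↦ x * stdNormalPDF x := by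
  refine ((integrable_mul_exp_neg_mul_sq (b := 1 / 2) (by norm_num)).div_const (√(2 * π))).congr
    (ae_of_all _ fun x ↦ ?_)
  simp only [stdNormalPDF]
  ring_nf

lemma stdNormalCDF_neg (t : ℝ) : stdNormalCDF (-t) = ∫ x in Ioi t, stdNormalPDF x := by
  rw [stdNormalCDF, ← integral_comp_neg_Ioi]
  simp_rw [stdNormalPDF_neg]

lemma stdNormalCDF_nonneg (x : ℝ) : 0 ≤ stdNormalCDF x :=
  setIntegral_nonneg measurableSet_Iic fun y _ ↦ (stdNormalPDF_pos y).le

lemma stdNormalCDF_zero : stdNormalCDF 0 = 1 / 2 := by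
  have h : stdNormalCDF 0 + stdNormalCDF (-0) = 1 := by
    rw [stdNormalCDF_neg, stdNormalCDF, intervalIntegral.integral_Iic_add_Ioi
      integrable_stdNormalPDF.integrableOn integrable_stdNormalPDF.integrableOn,
      integral_stdNormalPDF]
  rw [neg_zero] at h
  linarith

lemma hasDerivAt_stdNormalCDF (x : ℝ) : HasDerivAt stdNormalCDF (stdNormalPDF x) x := by
  have h : stdNormalCDF = fun y ↦ stdNormalCDF 0 + ∫ u in (0 : ℝ)..y, stdNormalPDF u := by
    ext y
    rw [← intervalIntegral.integral_Iic_sub_Iic integrable_stdNormalPDF.integrableOn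
      integrable_stdNormalPDF.integrableOn, stdNormalCDF, stdNormalCDF, add_sub_cancel]
  rw [h]
  exact (continuous_stdNormalPDF.integral_hasStrictDerivAt 0 x).hasDerivAt.const_add _

lemma integral_Ioi_mul_stdNormalPDF (t : ℝ) :
    ∫ x in Ioi t, x * stdNormalPDF x = stdNormalPDF t := by
  have h := integral_Ioi_of_hasDerivAt_of_tendsto' (a := t) (f := fun x ↦ -stdNormalPDF x)
    (fun x _ ↦ (hasDerivAt_stdNormalPDF x).neg.congr_deriv (by ring))
    integrable_mul_stdNormalPDF.integrableOn
    (by simpa using (tendsto_pow_mul_stdNormalPDF_atTop 0).neg)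
  simpa using h

lemma mul_stdNormalCDF_neg_lt (t : ℝ) : t * stdNormalCDF (-t) < stdNormalPDF t := by
  have hint : IntegrableOn (fun x ↦ (x - t) * stdNormalPDF x) (Ioi t) := by
    simp_rw [sub_mul]
    exact (integrable_mul_stdNormalPDF.sub (integrable_stdNormalPDF.const_mul t)).integrableOn
  have hpos : 0 < ∫ x in Ioi t, (x - t) * stdNormalPDF x := by
    refine setIntegral_pos_iff_support_of_nonneg_ae ?_ hint |>.2 ?_
    · filter_upwards [ae_restrict_mem measurableSet_Ioi] with x hx
      exact mul_nonneg (sub_nonneg.2 (le_of_lt hx)) (stdNormalPDF_pos x).le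
    · refine (by simp : (0 : ℝ≥0∞) < volume (Ioi t)).trans_le (measure_mono fun x hx ↦ ⟨?_, hx⟩)
      exact (mul_pos (sub_pos.2 hx) (stdNormalPDF_pos x)).ne'
  have heq : ∫ x in Ioi t, (x - t) * stdNormalPDF x = stdNormalPDF t - t * stdNormalCDF (-t) := by
    simp_rw [sub_mul]
    rw [integral_sub integrable_mul_stdNormalPDF.integrableOn
      (integrable_stdNormalPDF.const_mul t).integrableOn, integral_const_mul,
      integral_Ioi_mul_stdNormalPDF, stdNormalCDF_neg]
  linarith

lemma hasDerivAt_ffun (t : ℝ) :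
    HasDerivAt ffun (2 * t * stdNormalCDF (-t) - 2 * stdNormalPDF t) t := by
  have hcdf : HasDerivAt (fun y ↦ stdNormalCDF (-y)) (-stdNormalPDF t) t := by
    simpa [stdNormalPDF_neg, Function.comp_def] using
      (hasDerivAt_stdNormalCDF (-t)).comp t (hasDerivAt_neg t)
  have h := (((hasDerivAt_pow 2 t).const_add 1).mul hcdf).sub
    ((hasDerivAt_id t).mul (hasDerivAt_stdNormalPDF t))
  exact h.congr_deriv (by simp only [Nat.cast_ofNat, Nat.add_one_sub_one, pow_one, id_eq]; ring)

lemma continuous_ffun : Continuous ffun :=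
  continuous_iff_continuousAt.2 fun t ↦ (hasDerivAt_ffun t).continuousAt

lemma ffun_zero : ffun 0 = 1 / 2 := by
  rw [ffun, neg_zero, stdNormalCDF_zero]
  ring

lemma strictAntiOn_ffun : StrictAntiOn ffun (Ioi 0) := by
  refine strictAntiOn_of_deriv_neg (convex_Ioi 0) continuous_ffun.continuousOn fun t ht ↦ ?_
  rw [interior_Ioi] at ht
  rw [(hasDerivAt_ffun t).deriv]
  linarith [mul_stdNormalCDF_neg_lt t]

lemma abs_ffun_le {t : ℝ} (ht : 1 ≤ t) : |ffun t| ≤ t * stdNormalPDF t := by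
  have htail := mul_stdNormalCDF_neg_lt t
  have hcdf := stdNormalCDF_nonneg (-t)
  have hpdf := stdNormalPDF_pos t
  rw [abs_le, ffun]
  constructor <;> nlinarith

lemma tendsto_ffun_atTop : Tendsto ffun atTop (𝓝 0) := by
  refine squeeze_zero_norm' ?_ (by simpa using tendsto_pow_mul_stdNormalPDF_atTop 1)
  filter_upwards [eventually_ge_atTop 1] with t ht
  exact abs_ffun_le ht

lemma existsUnique_pos_eq_of_strictAntiOn {f : ℝ → ℝ} {l y : ℝ} (hf : ContinuousOn f (Ici 0))
    (hanti : StrictAntiOn f (Ioi 0)) (hlim : Tendsto f atTop (𝓝 l)) (hly : l < y)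
    (hy : y < f 0) : ∃! t, 0 < t ∧ f t = y := by
  obtain ⟨T, hT, hT0⟩ := ((hlim.eventually (eventually_lt_nhds hly)).and
    (eventually_ge_atTop 0)).exists
  obtain ⟨t, ht, hft⟩ := intermediate_value_Ioo' hT0 (hf.mono Icc_subset_Ici_self) ⟨hT, hy⟩
  exact ⟨t, ⟨ht.1, hft⟩, fun s hs ↦ hanti.injOn hs.1 ht.1 (hs.2.trans hft.symm)⟩

theorem ffun_props :
    ffun 0 = 1 / 2 ∧ StrictAntiOn ffun (Set.Ioi 0) ∧
    Filter.Tendsto ffun Filter.atTop (nhds 0) ∧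
    ∀ δ : ℝ, 0 < δ → δ < 1 → ∃! t : ℝ, 0 < t ∧ ffun t = δ / 2 := by
  refine ⟨ffun_zero, strictAntiOn_ffun, tendsto_ffun_atTop, fun δ hδ hδ1 ↦ ?_⟩
  exact existsUnique_pos_eq_of_strictAntiOn continuous_ffun.continuousOn strictAntiOn_ffun
    tendsto_ffun_atTop (by linarith) (by rw [ffun_zero]; linarith)
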